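/- arXiv:1501.04476 — 2 statements merged into one kernel-verified Lean document; each statement's English description precedes it below -/
import Mathlib

section
/- Let M ∈ (1/2)ℕ be positive, ε ∈ {0,1}, τ in the upper half-plane, and define the level 2M Appell–Lerch sum F_{M,ε}(z,u;τ) := (ζw⁻¹)^M Σ_{n∈ℤ} (-1)^{nε} w^{-2Mn} q^{Mn(n+1)} / (1 - qⁿζw⁻¹), where q = e^{2πiτ}, ζ = e^{2πiz}, w = e^{2πiu}. Then for all integers λ, μ, as a function of u: F_{M,ε}(z, u+λτ+μ; τ) = (-1)^{2Mμ+λε} e^{-2πiM(λ²τ+2λu)} F_{M,ε}(z,u;τ), whenever u, u+λτ+μ avoid the poles z + ℤτ + ℤ. -/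
noncomputable section
open Complex

/-- `e x = exp(2πix)` -/
def e (x : ℂ) : ℂ := Complex.exp (2 * Real.pi * Complex.I * x)

/-- The level `2M` Appell–Lerch sum
`F_{M,ε}(z,u;τ) = (ζw⁻¹)^M Σ_{n∈ℤ} (-1)^{nε} w^{-2Mn} q^{Mn(n+1)} / (1 - qⁿζw⁻¹)`,
where half-integer powers are defined via exponentials. -/
def appell (M : ℝ) (ε : ℕ) (z u τ : ℂ) : ℂ :=
  e (M * (z - u)) * ∑' n : ℤ,
    (-1 : ℂ) ^ (n * (ε : ℤ)) * e (-(u * (2 * M * n))) * e (τ * (M * n * (n + 1)))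
      / (1 - e (τ * n) * e (z - u))

lemma neg_one_zpow_eq_exp (j : ℤ) :
    (-1 : ℂ) ^ j = Complex.exp ((j : ℂ) * (Real.pi * Complex.I)) := by
  rw [Complex.exp_int_mul, Complex.exp_pi_mul_I]

theorem appell_elliptic_transform
    (τ : ℂ) (hτ : 0 < τ.im) (z : ℂ)
    (M : ℝ) (hM : 0 < M) (hM2 : ∃ k : ℕ, M = (k : ℝ) / 2)
    (ε : ℕ) (hε : ε = 0 ∨ ε = 1) (lam μ : ℤ) (u : ℂ)
    (hu : ∀ a b : ℤ, u ≠ z + a * τ + b)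
    (hu' : ∀ a b : ℤ, u + lam * τ + μ ≠ z + a * τ + b) :
    appell M ε z (u + lam * τ + μ) τ
      = Complex.exp (Real.pi * Complex.I * (2 * M * μ + lam * ε))
          * Complex.exp (-2 * Real.pi * Complex.I * M * (lam ^ 2 * τ + 2 * lam * u))
          * appell M ε z u τ := by
  obtain ⟨k, hk⟩ := hM2
  have hkC : (M : ℂ) = (k : ℂ) / 2 := by
    rw [hk]; push_cast; ring
  set B : ℂ := Complex.exp (((lam : ℂ) * ε) * (Real.pi * Complex.I)) *
      Complex.exp ((2 * Real.pi * Complex.I) *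
        (τ * M * ((lam : ℂ) - (lam : ℂ) ^ 2) - 2 * M * u * lam)) with hB
  set g : ℤ → ℂ := fun n =>
    (-1 : ℂ) ^ (n * (ε : ℤ)) * e (-((u + lam * τ + μ) * (2 * M * n))) * e (τ * (M * n * (n + 1)))
      / (1 - e (τ * n) * e (z - (u + lam * τ + μ))) with hg
  set f : ℤ → ℂ := fun n =>
    (-1 : ℂ) ^ (n * (ε : ℤ)) * e (-(u * (2 * M * n))) * e (τ * (M * n * (n + 1)))
      / (1 - e (τ * n) * e (z - u)) with hf
  have hterm : ∀ n : ℤ, g (n + lam) = B * f n := by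
    intro n
    have hden : 1 - e (τ * ((n + lam : ℤ) : ℂ)) * e (z - (u + lam * τ + μ))
        = 1 - e (τ * (n : ℂ)) * e (z - u) := by
      congr 1
      rw [e, e, e, e, ← Complex.exp_add, ← Complex.exp_add,
        Complex.exp_eq_exp_iff_exists_int]
      exact ⟨-μ, by push_cast; ring⟩
    have hnum : (-1 : ℂ) ^ ((n + lam) * (ε : ℤ)) *
          e (-((u + lam * τ + μ) * (2 * M * ((n + lam : ℤ) : ℂ)))) *
          e (τ * (M * ((n + lam : ℤ) : ℂ) * (((n + lam : ℤ) : ℂ) + 1)))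
        = B * ((-1 : ℂ) ^ (n * (ε : ℤ)) * e (-(u * (2 * M * n))) *
            e (τ * (M * n * (n + 1)))) := by
      rw [neg_one_zpow_eq_exp, neg_one_zpow_eq_exp, hB, e, e, e, e]
      simp only [← Complex.exp_add]
      rw [Complex.exp_eq_exp_iff_exists_int]
      refine ⟨-(k : ℤ) * μ * (n + lam), ?_⟩
      simp only [hkC]
      push_cast
      ring
    simp only [hg, hf]
    rw [hden.symm] at *
    push_cast
    push_cast at hnum hden
    rw [hden, hnum, mul_div_assoc]
  have hshift : (∑' n : ℤ, g n) = ∑' n : ℤ, g (n + lam) :=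
    ((Equiv.addRight lam).tsum_eq g).symm
  have hS : (∑' n : ℤ, g n) = B * ∑' n : ℤ, f n := by
    rw [hshift, tsum_congr hterm, tsum_mul_left]
  have hc : e ((M : ℂ) * (z - (u + lam * τ + μ))) * B
      = Complex.exp (Real.pi * Complex.I * (2 * M * μ + lam * ε))
          * Complex.exp (-2 * Real.pi * Complex.I * M * (lam ^ 2 * τ + 2 * lam * u))
          * e ((M : ℂ) * (z - u)) := by
    rw [hB, e, e]
    simp only [← Complex.exp_add]
    rw [Complex.exp_eq_exp_iff_exists_int]
    refine ⟨-(k : ℤ) * μ, ?_⟩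
    simp only [hkC]
    push_cast
    ring
  show e ((M : ℂ) * (z - (u + lam * τ + μ))) * (∑' n : ℤ, g n) = _ * _ * (e ((M : ℂ) * (z - u)) * ∑' n : ℤ, f n)
  rw [hS]
  linear_combination (∑' n : ℤ, f n) * hc
end
end

section
/- Let M ∈ (1/2)ℕ be positive, ε ∈ {0,1}, τ in the upper half-plane, and z ∈ ℂ. Then as a function of u, the Appell–Lerch sum F_{M,ε}(z,u;τ) is meromorphic with only simple poles, located exactly at u ∈ z + ℤτ + ℤ, and the residue of F_{M,ε}(z,·;τ) at u = z equals 1/(2πi). -/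
noncomputable section
open Complex Filter

/-!
Near any `u₀` only finitely many denominators `1 - qⁿ ζ w⁻¹` come close to `0`: for the others
`|Im (nτ + z - u)| ≥ 1`, so `|qⁿ ζ w⁻¹|` is at most `e^{-2π}` or at least `e^{2π}`. The numerators
are Jacobi theta summands, whose Gaussian decay gives a summable majorant, so the remaining tail
is holomorphic near `u₀`. Each of the finitely many exceptional terms has at most a simple pole,
at the zeros `u = z + nτ + m` of its denominator, whose derivative there is `2πi`. Distinct `n`
give disjoint pole sets since `Im τ > 0`, so the residue at `u = z + aτ + b` is the nonzero number
`e(M(z - u)) · numerator / (2πi)`, which is `1 / (2πi)` at `u = z`.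
-/

open Metric Topology

lemma e_add (x y : ℂ) : e (x + y) = e x * e y := by
  rw [e, e, e, mul_add, Complex.exp_add]

lemma e_zero : e 0 = 1 := by
  simp [e]

lemma e_ne_zero (x : ℂ) : e x ≠ 0 :=
  Complex.exp_ne_zero _

lemma norm_e (x : ℂ) : ‖e x‖ = Real.exp (-(2 * Real.pi * x.im)) := by
  rw [e, Complex.norm_exp]
  simp [Complex.mul_re]

lemma e_eq_one_iff {x : ℂ} : e x = 1 ↔ ∃ n : ℤ, x = n := by
  rw [e, Complex.exp_eq_one_iff]
  exact exists_congr fun n => by rw [mul_comm _ x, mul_left_inj' two_pi_I_ne_zero]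

lemma hasDerivAt_e (x : ℂ) : HasDerivAt e (2 * Real.pi * I * e x) x := by
  have h := ((hasDerivAt_id x).const_mul (2 * Real.pi * I : ℂ)).cexp
  simp only [id, mul_one] at h
  exact h.congr_deriv (mul_comm _ _)

lemma differentiable_e : Differentiable ℂ e :=
  fun x => (hasDerivAt_e x).differentiableAt

lemma half_le_norm_one_sub_e {w : ℂ} (hw : 1 ≤ |w.im|) : 1 / 2 ≤ ‖1 - e w‖ := by
  have h2 : 2 ≤ Real.exp (2 * Real.pi) := by
    linarith [Real.add_one_le_exp (2 * Real.pi), Real.pi_gt_three]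
  have hnorm : 1 / 2 ≤ |‖(1 : ℂ)‖ - ‖e w‖| := by
    rw [norm_one, norm_e]
    rcases le_abs'.1 hw with h | h
    · have : Real.exp (2 * Real.pi) ≤ Real.exp (-(2 * Real.pi * w.im)) :=
        Real.exp_le_exp.2 (by nlinarith [Real.pi_pos])
      rw [abs_sub_comm, le_abs]
      left; linarith
    · have : Real.exp (-(2 * Real.pi * w.im)) ≤ Real.exp (-(2 * Real.pi)) :=
        Real.exp_le_exp.2 (by nlinarith [Real.pi_pos])
      have : Real.exp (-(2 * Real.pi)) ≤ 1 / 2 := by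
        rw [Real.exp_neg, one_div]
        exact inv_anti₀ two_pos h2
      rw [le_abs]
      left; linarith
  exact hnorm.trans (abs_norm_sub_norm_le _ _)

lemma abs_im_sub_lt_of_mem_ball {u u₀ : ℂ} {r : ℝ} (hu : u ∈ ball u₀ r) :
    |u.im - u₀.im| < r :=
  (Complex.sub_im u u₀ ▸ Complex.abs_im_le_norm (u - u₀)).trans_lt (mem_ball_iff_norm.1 hu)

lemma exists_finset_le_abs_intCast_mul_add {t : ℝ} (ht : 0 < t) (c R : ℝ) :
    ∃ S : Finset ℤ, ∀ n ∉ S, R ≤ |n * t + c| := by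
  refine ⟨Finset.Icc (-⌈(R + |c|) / t⌉) ⌈(R + |c|) / t⌉, fun n hn => ?_⟩
  have hN : (R + |c|) / t ≤ |(n : ℝ)| := by
    rw [Finset.mem_Icc, ← abs_le, not_le] at hn
    exact (Int.le_ceil _).trans (by exact_mod_cast hn.le)
  rw [div_le_iff₀ ht] at hN
  calc R ≤ |n * t| - |c| := by rw [abs_mul, abs_of_pos ht]; linarith
    _ ≤ |n * t + c| := abs_sub_abs_le_abs_add _ _

lemma exists_differentiableOn_tsum_eq_sum_add {ι : Type*} {f : ι → ℂ → ℂ} {U : Set ℂ}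
    (hU : IsOpen U) (S : Finset ι) {b : ι → ℝ} (hb : Summable b)
    (hf : ∀ i ∉ S, DifferentiableOn ℂ (f i) U) (hfb : ∀ i ∉ S, ∀ u ∈ U, ‖f i u‖ ≤ b i) :
    ∃ g : ℂ → ℂ, DifferentiableOn ℂ g U ∧ ∀ u ∈ U, ∑' i, f i u = ∑ i ∈ S, f i u + g u := by
  have hb' : Summable fun i : {i // i ∉ S} => b i := hb.subtype _
  refine ⟨fun u => ∑' i : {i // i ∉ S}, f i u,
    differentiableOn_tsum_of_summable_norm hb' (fun i => hf i i.2) hU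
      (fun i u hu => hfb i i.2 u hu), fun u hu => ?_⟩
  have hsum : Summable fun i : {i // i ∉ S} => f i u :=
    hb'.of_norm_bounded fun i => hfb i i.2 u hu
  exact (((S.summable_compl_iff).1 hsum).sum_add_tsum_subtype_compl S).symm

lemma tendsto_sub_mul_div_add {φ ψ h : ℂ → ℂ} {u₀ ψ' : ℂ} (hφ : ContinuousAt φ u₀)
    (hψ : HasDerivAt ψ ψ' u₀) (hψ₀ : ψ u₀ = 0) (hψ' : ψ' ≠ 0) (hh : ContinuousAt h u₀) :
    Tendsto (fun v => (v - u₀) * (φ v / ψ v + h v)) (𝓝[≠] u₀) (𝓝 (φ u₀ / ψ')) := by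
  have hslope := (hasDerivAt_iff_tendsto_slope.1 hψ).inv₀ hψ'
  have hsub : Tendsto (fun v => v - u₀) (𝓝[≠] u₀) (𝓝 0) :=
    tendsto_sub_nhds_zero_iff.2 nhdsWithin_le_nhds
  have hlim := ((hφ.tendsto.mono_left nhdsWithin_le_nhds).mul hslope).add
    (hsub.mul (hh.tendsto.mono_left nhdsWithin_le_nhds))
  rw [zero_mul, add_zero, ← div_eq_mul_inv] at hlim
  refine hlim.congr fun v => ?_
  rw [slope_def_field, hψ₀, sub_zero, inv_div]
  ring

section Appell

variable (M : ℝ) (ε : ℕ) (z τ : ℂ)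

def appellNumer (n : ℤ) (u : ℂ) : ℂ :=
  (-1 : ℂ) ^ (n * (ε : ℤ)) * e (-(u * (2 * M * n))) * e (τ * (M * n * (n + 1)))

def appellDenom (n : ℤ) (u : ℂ) : ℂ :=
  1 - e (τ * n) * e (z - u)

lemma appell_eq_tsum (u : ℂ) :
    appell M ε z u τ =
      e (M * (z - u)) * ∑' n : ℤ, appellNumer M ε τ n u / appellDenom z τ n u :=
  rfl

lemma appellNumer_eq_jacobiTheta₂_term (n : ℤ) (u : ℂ) :
    appellNumer M ε τ n u =
      (-1 : ℂ) ^ (n * (ε : ℤ)) * jacobiTheta₂_term n (M * (τ - 2 * u)) (2 * M * τ) := by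
  rw [appellNumer, mul_assoc, ← e_add, e, jacobiTheta₂_term]
  congr 2
  ring

lemma norm_appellNumer (n : ℤ) (u : ℂ) :
    ‖appellNumer M ε τ n u‖ = ‖jacobiTheta₂_term n (M * (τ - 2 * u)) (2 * M * τ)‖ := by
  rw [appellNumer_eq_jacobiTheta₂_term, norm_mul, norm_zpow, norm_neg, norm_one, one_zpow,
    one_mul]

lemma appellNumer_ne_zero (n : ℤ) (u : ℂ) : appellNumer M ε τ n u ≠ 0 := by
  rw [← norm_ne_zero_iff, norm_appellNumer, norm_ne_zero_iff]
  exact Complex.exp_ne_zero _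

lemma differentiable_appellNumer (n : ℤ) : Differentiable ℂ (appellNumer M ε τ n) := by
  unfold appellNumer
  have := differentiable_e
  fun_prop

lemma exists_summable_norm_appellNumer_le (hM : 0 < M) (hτ : 0 < τ.im) (R : ℝ) :
    ∃ b : ℤ → ℝ, Summable b ∧ ∀ n u, |u.im| ≤ R → ‖appellNumer M ε τ n u‖ ≤ b n := by
  have hb := summable_pow_mul_jacobiTheta₂_term_bound (M * (τ.im + 2 * R))
    (T := 2 * M * τ.im) (by positivity) 0
  simp only [pow_zero, one_mul] at hb
  refine ⟨_, hb, fun n u hu => ?_⟩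
  rw [norm_appellNumer]
  refine norm_jacobiTheta₂_term_le (by positivity) ?_ (by simp) n
  have him : (M * (τ - 2 * u) : ℂ).im = M * (τ.im - 2 * u.im) := by simp
  rw [him, abs_mul, abs_of_pos hM]
  gcongr
  calc |τ.im - 2 * u.im| ≤ |τ.im| + |2 * u.im| := abs_sub _ _
    _ ≤ τ.im + 2 * R := by rw [abs_of_pos hτ, abs_mul, abs_two]; linarith

lemma appellDenom_eq (n : ℤ) (u : ℂ) : appellDenom z τ n u = 1 - e (τ * n + (z - u)) := by
  rw [appellDenom, e_add]

lemma appellDenom_eq_zero_iff {n : ℤ} {u : ℂ} :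
    appellDenom z τ n u = 0 ↔ ∃ m : ℤ, u = z + n * τ + m := by
  rw [appellDenom_eq, sub_eq_zero, eq_comm, e_eq_one_iff]
  exact ⟨fun ⟨m, hm⟩ => ⟨-m, by push_cast; linear_combination -hm⟩,
    fun ⟨m, hm⟩ => ⟨-m, by rw [hm]; push_cast; ring⟩⟩

lemma hasDerivAt_appellDenom (n : ℤ) (u : ℂ) :
    HasDerivAt (appellDenom z τ n) (2 * Real.pi * I * (1 - appellDenom z τ n u)) u := by
  have h := (((hasDerivAt_e (z - u)).comp u ((hasDerivAt_id u).const_sub z)).const_mul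
    (e (τ * n))).const_sub 1
  rw [show 2 * Real.pi * I * (1 - appellDenom z τ n u)
    = -(e (τ * n) * (2 * Real.pi * I * e (z - u) * -1)) by rw [appellDenom]; ring]
  exact h

lemma differentiable_appellDenom (n : ℤ) : Differentiable ℂ (appellDenom z τ n) :=
  fun u => (hasDerivAt_appellDenom z τ n u).differentiableAt

lemma exists_finset_half_le_norm_appellDenom (hτ : 0 < τ.im) (u₀ : ℂ) :
    ∃ S : Finset ℤ, ∀ n ∉ S, ∀ u ∈ ball u₀ 1, 1 / 2 ≤ ‖appellDenom z τ n u‖ := by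
  obtain ⟨S, hS⟩ := exists_finset_le_abs_intCast_mul_add hτ (z.im - u₀.im) 2
  refine ⟨S, fun n hn u hu => ?_⟩
  rw [appellDenom_eq]
  apply half_le_norm_one_sub_e
  have him : (τ * n + (z - u)).im = (n * τ.im + (z.im - u₀.im)) - (u.im - u₀.im) := by
    simp only [Complex.add_im, Complex.sub_im, Complex.mul_im, Complex.intCast_re,
      Complex.intCast_im]
    ring
  rw [him]
  linarith [hS n hn, abs_im_sub_lt_of_mem_ball hu, abs_sub_abs_le_abs_sub
    (n * τ.im + (z.im - u₀.im)) (u.im - u₀.im)]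

lemma exists_appell_eq_sum_add (hM : 0 < M) (hτ : 0 < τ.im) (u₀ : ℂ) (T : Finset ℤ) :
    ∃ S : Finset ℤ, T ⊆ S ∧ ∃ g : ℂ → ℂ, DifferentiableOn ℂ g (ball u₀ 1) ∧
      ∀ u ∈ ball u₀ 1, appell M ε z u τ =
        e (M * (z - u)) * (∑ n ∈ S, appellNumer M ε τ n u / appellDenom z τ n u + g u) := by
  obtain ⟨S, hS⟩ := exists_finset_half_le_norm_appellDenom z τ hτ u₀
  obtain ⟨b, hb, hnum⟩ := exists_summable_norm_appellNumer_le M ε τ hM hτ (|u₀.im| + 1)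
  have hden : ∀ n ∉ T ∪ S, ∀ u ∈ ball u₀ 1, 1 / 2 ≤ ‖appellDenom z τ n u‖ :=
    fun n hn => hS n fun h => hn (Finset.mem_union_right T h)
  obtain ⟨g, hg, hsplit⟩ := exists_differentiableOn_tsum_eq_sum_add isOpen_ball (T ∪ S)
    (hb.mul_left 2) (f := fun n u => appellNumer M ε τ n u / appellDenom z τ n u)
    (fun n hn => (differentiable_appellNumer M ε τ n).differentiableOn.div
      (differentiable_appellDenom z τ n).differentiableOn
      fun u hu => norm_pos_iff.1 (one_half_pos.trans_le (hden n hn u hu)))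
    (fun n hn u hu => by
      have hu' : |u.im| ≤ |u₀.im| + 1 := by
        linarith [abs_im_sub_lt_of_mem_ball hu, abs_sub_abs_le_abs_sub u.im u₀.im]
      rw [norm_div, div_le_iff₀ (one_half_pos.trans_le (hden n hn u hu))]
      nlinarith [hnum n u hu', hden n hn u hu, norm_nonneg (appellNumer M ε τ n u)])
  exact ⟨T ∪ S, Finset.subset_union_left, g, hg, fun u hu => by rw [appell_eq_tsum, hsplit u hu]⟩

lemma differentiable_e_mul_sub : Differentiable ℂ fun v => e (M * (z - v)) :=
  differentiable_e.comp (by fun_prop)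

lemma differentiableAt_sum_appellNumer_div {S : Finset ℤ} {u : ℂ}
    (hS : ∀ n ∈ S, appellDenom z τ n u ≠ 0) :
    DifferentiableAt ℂ (fun v => ∑ n ∈ S, appellNumer M ε τ n v / appellDenom z τ n v) u :=
  DifferentiableAt.fun_sum fun n hn => (differentiable_appellNumer M ε τ n).differentiableAt.div
    (differentiable_appellDenom z τ n).differentiableAt (hS n hn)

theorem differentiableAt_appell (hM : 0 < M) (hτ : 0 < τ.im) {u : ℂ}
    (hu : ∀ a b : ℤ, u ≠ z + a * τ + b) :
    DifferentiableAt ℂ (fun v => appell M ε z v τ) u := by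
  obtain ⟨S, -, g, hg, hsplit⟩ := exists_appell_eq_sum_add M ε z τ hM hτ u ∅
  have hden (n : ℤ) : appellDenom z τ n u ≠ 0 := fun h =>
    let ⟨m, hm⟩ := (appellDenom_eq_zero_iff z τ).1 h
    hu n m hm
  refine DifferentiableAt.congr_of_eventuallyEq ?_
    (eventuallyEq_of_mem (ball_mem_nhds u one_pos) hsplit)
  exact (differentiable_e_mul_sub M z u).mul
    ((differentiableAt_sum_appellNumer_div M ε z τ fun n _ => hden n).add
      (hg.differentiableAt (ball_mem_nhds u one_pos)))

theorem tendsto_sub_mul_appell (hM : 0 < M) (hτ : 0 < τ.im) (a b : ℤ) :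
    Tendsto (fun v => (v - (z + a * τ + b)) * appell M ε z v τ)
      (𝓝[≠] (z + a * τ + b))
      (𝓝 (e (M * (z - (z + a * τ + b))) * appellNumer M ε τ a (z + a * τ + b) /
        (2 * Real.pi * I))) := by
  set u₀ := z + a * τ + b
  obtain ⟨S, haS, g, hg, hsplit⟩ := exists_appell_eq_sum_add M ε z τ hM hτ u₀ {a}
  have hden₀ : appellDenom z τ a u₀ = 0 := (appellDenom_eq_zero_iff z τ).2 ⟨b, rfl⟩
  have hden (n : ℤ) (hn : n ≠ a) : appellDenom z τ n u₀ ≠ 0 := fun h => by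
    obtain ⟨m, hm⟩ := (appellDenom_eq_zero_iff z τ).1 h
    have him := congrArg Complex.im hm
    simp only [u₀, Complex.add_im, Complex.mul_im, Complex.intCast_re, Complex.intCast_im,
      zero_mul, add_zero] at him
    exact hn (by exact_mod_cast mul_right_cancel₀ hτ.ne' (add_left_cancel him).symm)
  have hrest : DifferentiableAt ℂ (fun v => e (M * (z - v)) *
      (∑ n ∈ S.erase a, appellNumer M ε τ n v / appellDenom z τ n v + g v)) u₀ :=
    (differentiable_e_mul_sub M z u₀).mul
      ((differentiableAt_sum_appellNumer_div M ε z τ fun n hn =>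
        hden n (Finset.ne_of_mem_erase hn)).add
      (hg.differentiableAt (ball_mem_nhds u₀ one_pos)))
  have hres := tendsto_sub_mul_div_add
    (φ := fun v => e (M * (z - v)) * appellNumer M ε τ a v)
    ((differentiable_e_mul_sub M z).mul (differentiable_appellNumer M ε τ a) u₀).continuousAt
    (by simpa [hden₀] using hasDerivAt_appellDenom z τ a u₀) hden₀ two_pi_I_ne_zero
    hrest.continuousAt
  refine hres.congr' (eventuallyEq_of_mem
    (mem_nhdsWithin_of_mem_nhds (ball_mem_nhds u₀ one_pos)) fun v hv => ?_)
  rw [hsplit v hv, ← Finset.add_sum_erase S _ (Finset.singleton_subset_iff.1 haS)]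
  ring

end Appell

theorem appell_poles_and_residue_general
    (τ : ℂ) (hτ : 0 < τ.im) (z : ℂ)
    (M : ℝ) (hM : 0 < M)
    (ε : ℕ) :
    -- holomorphic away from `z + ℤτ + ℤ`
    (∀ u : ℂ, (∀ a b : ℤ, u ≠ z + a * τ + b) →
        DifferentiableAt ℂ (fun v => appell M ε z v τ) u) ∧
    -- a simple pole at each point of `z + ℤτ + ℤ`
    (∀ a b : ℤ, ∃ c : ℂ, c ≠ 0 ∧
        Tendsto (fun v => (v - (z + a * τ + b)) * appell M ε z v τ)
          (nhdsWithin (z + a * τ + b) {z + a * τ + b}ᶜ) (nhds c)) ∧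
    -- the residue at `u = z` equals `1/(2πi)`
    Tendsto (fun v => (v - z) * appell M ε z v τ)
      (nhdsWithin z {z}ᶜ) (nhds (1 / (2 * Real.pi * Complex.I))) := by
  refine ⟨fun u hu => differentiableAt_appell M ε z τ hM hτ hu,
    fun a b => ⟨_, ?_, tendsto_sub_mul_appell M ε z τ hM hτ a b⟩, ?_⟩
  · exact div_ne_zero (mul_ne_zero (e_ne_zero _) (appellNumer_ne_zero M ε τ a _))
      two_pi_I_ne_zero
  · simpa [appellNumer, e_zero] using tendsto_sub_mul_appell M ε z τ hM hτ 0 0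

/-- As a function of `u`, the Appell–Lerch sum is meromorphic with only simple poles,
located exactly at `u ∈ z + ℤτ + ℤ`, and its residue at `u = z` is `1/(2πi)`. -/
theorem appell_poles_and_residue
    (τ : ℂ) (hτ : 0 < τ.im) (z : ℂ)
    (M : ℝ) (hM : 0 < M) (hM2 : ∃ k : ℕ, M = (k : ℝ) / 2)
    (ε : ℕ) (hε : ε = 0 ∨ ε = 1) :
    -- holomorphic away from `z + ℤτ + ℤ`
    (∀ u : ℂ, (∀ a b : ℤ, u ≠ z + a * τ + b) →
        DifferentiableAt ℂ (fun v => appell M ε z v τ) u) ∧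
    -- a simple pole at each point of `z + ℤτ + ℤ`
    (∀ a b : ℤ, ∃ c : ℂ, c ≠ 0 ∧
        Tendsto (fun v => (v - (z + a * τ + b)) * appell M ε z v τ)
          (nhdsWithin (z + a * τ + b) {z + a * τ + b}ᶜ) (nhds c)) ∧
    -- the residue at `u = z` equals `1/(2πi)`
    Tendsto (fun v => (v - z) * appell M ε z v τ)
      (nhdsWithin z {z}ᶜ) (nhds (1 / (2 * Real.pi * Complex.I))) :=
  appell_poles_and_residue_general τ hτ z M hM ε
end
end
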